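/- arXiv:2301.08207 — 3 statements merged into one kernel-verified Lean document; each statement's English description precedes it below -/
import Mathlib

section
/- Let G be a stabilizer group of rank k on I = I₁ ⊕ I₂ with stabilizer density matrix ρ = 2^{-N_A}·Σ_{g∈G} g, and let k₁, k₂ be the ranks of the subgroups G_{A1}, G_{A2} of elements supported in A₁, A₂ respectively. Then for every even natural number n ≥ 2, Tr[(R_ρ† R_ρ)^{n/2}] = 2^{k + (n/2 − 1)(k₁ + k₂) − (n/2)·N_A}. -/
open scoped ComplexOrder Matrix

noncomputable section

/-- The single-qubit Pauli matrices `σ⁰, σˣ, σʸ, σᶻ`. -/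
def pauli : Fin 4 → Matrix (Fin 2) (Fin 2) ℂ :=
  ![1, !![0, 1; 1, 0], !![0, -Complex.I; Complex.I, 0], !![1, 0; 0, -1]]

/-- Configurations of the qubits on `I₁ ⊕ I₂`, presented in factorized form. -/
abbrev Config (I₁ I₂ : Type) := (I₁ → Fin 2) × (I₂ → Fin 2)

variable {I₁ I₂ : Type} [Fintype I₁] [Fintype I₂] [DecidableEq I₁] [DecidableEq I₂]

/-- The sign-free tensor product `⨂_{i ∈ I₁ ⊕ I₂} σ^{a(i)}` of single-qubit Pauli
matrices, as a matrix on the factorized configuration space. -/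
def pauliTensor (a : I₁ ⊕ I₂ → Fin 4) :
    Matrix (Config I₁ I₂) (Config I₁ I₂) ℂ :=
  fun c c' => ∏ i, pauli (a i) (Sum.elim c.1 c.2 i) (Sum.elim c'.1 c'.2 i)

/-- A Pauli operator on `I₁ ⊕ I₂`: `ε·⨂ᵢ σ^{a(i)}` with `ε ∈ {1,−1}`. -/
def IsPauli (M : Matrix (Config I₁ I₂) (Config I₁ I₂) ℂ) : Prop :=
  ∃ (ε : ℂ) (a : I₁ ⊕ I₂ → Fin 4), (ε = 1 ∨ ε = -1) ∧ M = ε • pauliTensor a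

/-- A Pauli operator supported in `A₁`, i.e. acting trivially on all sites of `I₂`. -/
def SupportedIn1 (M : Matrix (Config I₁ I₂) (Config I₁ I₂) ℂ) : Prop :=
  ∃ (ε : ℂ) (a : I₁ ⊕ I₂ → Fin 4), (ε = 1 ∨ ε = -1) ∧ M = ε • pauliTensor a ∧
    ∀ i : I₂, a (Sum.inr i) = 0

/-- A Pauli operator supported in `A₂`, i.e. acting trivially on all sites of `I₁`. -/
def SupportedIn2 (M : Matrix (Config I₁ I₂) (Config I₁ I₂) ℂ) : Prop :=
  ∃ (ε : ℂ) (a : I₁ ⊕ I₂ → Fin 4), (ε = 1 ∨ ε = -1) ∧ M = ε • pauliTensor a ∧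
    ∀ i : I₁, a (Sum.inl i) = 0

/-- A stabilizer group on `I₁ ⊕ I₂`: a finite abelian group of Pauli operators under
matrix multiplication not containing `-1`; every element is Hermitian and squares to
the identity. -/
structure StabilizerGroup (I₁ I₂ : Type) [Fintype I₁] [Fintype I₂]
    [DecidableEq I₁] [DecidableEq I₂] where
  carrier : Finset (Matrix (Config I₁ I₂) (Config I₁ I₂) ℂ)
  isPauli : ∀ g ∈ carrier, IsPauli g
  one_mem : (1 : Matrix (Config I₁ I₂) (Config I₁ I₂) ℂ) ∈ carrier
  mul_mem : ∀ g ∈ carrier, ∀ h ∈ carrier, g * h ∈ carrier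
  mul_comm : ∀ g ∈ carrier, ∀ h ∈ carrier, g * h = h * g
  neg_one_not_mem : (-1 : Matrix (Config I₁ I₂) (Config I₁ I₂) ℂ) ∉ carrier
  hermitian : ∀ g ∈ carrier, g.IsHermitian
  sq_eq_one : ∀ g ∈ carrier, g * g = 1

/-- The stabilizer density matrix `ρ = 2^{−N_A}·Σ_{g ∈ G} g`. -/
def stabDensity (G : StabilizerGroup I₁ I₂) :
    Matrix (Config I₁ I₂) (Config I₁ I₂) ℂ :=
  ((2 : ℂ) ^ (Fintype.card I₁ + Fintype.card I₂))⁻¹ • ∑ g ∈ G.carrier, g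

/-- The realignment of a matrix on a bipartite system:
`R_M[(c₁,c₁'),(c₂,c₂')] = M[(c₁,c₂),(c₁',c₂')]`. -/
def realign {C₁ C₂ : Type*} (M : Matrix (C₁ × C₂) (C₁ × C₂) ℂ) :
    Matrix (C₁ × C₁) (C₂ × C₂) ℂ :=
  fun p q => M (p.1, q.1) (p.2, q.2)

/-- The partial transpose on the second factor:
`M^{T₂}[(c₁,c₂),(c₁',c₂')] = M[(c₁,c₂'),(c₁',c₂)]`. -/
def ptranspose {C₁ C₂ R : Type*} (M : Matrix (C₁ × C₂) (C₁ × C₂) R) :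
    Matrix (C₁ × C₂) (C₁ × C₂) R :=
  fun c c' => M (c.1, c'.2) (c'.1, c.2)

/-- The trace norm `‖M‖₁ = Tr√(MᴴM)` of a complex matrix. -/
def traceNorm {m n : Type*} [Fintype m] [Fintype n] [DecidableEq n]
    (M : Matrix m n ℂ) : ℝ :=
  (((Matrix.posSemidef_conjTranspose_mul_self M).1.eigenvectorUnitary : Matrix n n ℂ) *
    Matrix.diagonal (((↑) : ℝ → ℂ) ∘ (√·) ∘ (Matrix.posSemidef_conjTranspose_mul_self M).1.eigenvalues) *
    (star (Matrix.posSemidef_conjTranspose_mul_self M).1.eigenvectorUnitary :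
      Matrix n n ℂ)).trace.re

end

/-!
Write each `g ∈ G` as a Kronecker product `A_g ⊗ B_g` of Pauli strings on `I₁` and `I₂`. Its
realignment is the rank-one matrix `vec A_g · (vec B_g)ᵀ`, and distinct Pauli strings are
orthogonal for the trace form, so `R_g R_h† R_l` vanishes unless `gh` is supported in `A₁` and
`hl` in `A₂`, in which case it equals `2^{N_A} R_{ghl}`. Reparametrising the triple sum by
`(gh, hl, ghl)` gives `R_ρ R_ρ† R_ρ = 2^{k₁+k₂-N_A} R_ρ`, hence `M := R_ρ† R_ρ` satisfies
`M² = 2^{k₁+k₂-N_A} M`. Finally `Tr M = Tr ρ² = 2^{k-N_A}`, since realignment only permutes the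
entries of `ρ`.
-/

open Matrix Finset
open scoped Kronecker

theorem pow_succ_eq_pow_smul_of_mul_self_eq_smul {R A : Type*} [Monoid R] [Monoid A]
    [MulAction R A] [IsScalarTower R A A] {a : A} {c : R} (h : a * a = c • a) (m : ℕ) :
    a ^ (m + 1) = c ^ m • a := by
  induction m with
  | zero => simp
  | succ m ih => rw [pow_succ, ih, smul_mul_assoc, h, smul_smul, ← pow_succ]

theorem ne_zero_of_eq_one_or_eq_neg_one {R : Type*} [Ring R] [Nontrivial R] {ε : R}
    (hε : ε = 1 ∨ ε = -1) : ε ≠ 0 := by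
  rcases hε with rfl | rfl <;> simp

theorem sum_sum_sum_ite_mul_mul {H β : Type*} [Group H] [Fintype H] [AddCommMonoid β]
    (p q : H → Prop) [DecidablePred p] [DecidablePred q] (f : H → β) :
    ∑ g, ∑ h, ∑ l, (if p (g * h) ∧ q (h * l) then f (g * h * l) else 0) =
      (Nat.card {x // p x} * Nat.card {x // q x}) • ∑ u, f u := by
  calc ∑ g, ∑ h, ∑ l, (if p (g * h) ∧ q (h * l) then f (g * h * l) else 0)
      = ∑ h, ∑ s, ∑ t, (if p s ∧ q t then f (s * h⁻¹ * t) else 0) := by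
        rw [Finset.sum_comm]
        refine Finset.sum_congr rfl fun h _ => ?_
        rw [← Equiv.sum_comp (Equiv.mulRight h⁻¹ : H ≃ H)]
        refine Finset.sum_congr rfl fun s _ => ?_
        rw [← Equiv.sum_comp (Equiv.mulLeft h⁻¹ : H ≃ H)]
        simp [mul_assoc]
    _ = ∑ s, ∑ t, (if p s ∧ q t then ∑ u, f u else 0) := by
        rw [Finset.sum_comm]
        refine Finset.sum_congr rfl fun s _ => ?_
        rw [Finset.sum_comm]
        refine Finset.sum_congr rfl fun t _ => ?_
        split_ifs
        · exact Equiv.sum_comp ((Equiv.inv H).trans ((Equiv.mulLeft s).trans (Equiv.mulRight t))) f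
        · simp
    _ = _ := by
        rw [← Finset.sum_product' (f := fun s t => if p s ∧ q t then ∑ u, f u else 0),
          ← Finset.sum_filter, Finset.sum_const, Finset.filter_product, Finset.card_product,
          Nat.card_eq_fintype_card, Nat.card_eq_fintype_card, Fintype.card_subtype,
          Fintype.card_subtype]

theorem Finset.natCard_subtype_eq_ncard {α : Type*} (s : Finset α) (p : α → Prop) :
    Nat.card {x : s // p x} = Set.ncard {x | x ∈ s ∧ p x} :=
  (Nat.card_congr (Equiv.subtypeSubtypeEquivSubtypeInter (· ∈ s) p)).trans
    (Nat.card_coe_set_eq _)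

namespace Matrix

section PiKronecker

variable {J n R : Type*} [Fintype J]

def piKronecker [CommSemiring R] (A : J → Matrix n n R) : Matrix (J → n) (J → n) R :=
  of fun c c' => ∏ j, A j (c j) (c' j)

theorem piKronecker_mul [DecidableEq J] [Fintype n] [CommSemiring R] (A B : J → Matrix n n R) :
    piKronecker A * piKronecker B = piKronecker (A * B) := by
  ext c c''
  simp only [piKronecker, mul_apply, of_apply, Pi.mul_apply, ← prod_mul_distrib]
  exact (Fintype.prod_sum fun j x => A j (c j) x * B j x (c'' j)).symm

theorem piKronecker_one [DecidableEq n] [CommSemiring R] :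
    piKronecker (1 : J → Matrix n n R) = 1 := by
  ext c c'
  simp only [piKronecker, of_apply, Pi.one_apply, one_apply, Fintype.prod_ite_zero, funext_iff,
    prod_const_one]

theorem trace_piKronecker [DecidableEq J] [Fintype n] [CommSemiring R] (A : J → Matrix n n R) :
    (piKronecker A).trace = ∏ j, (A j).trace := by
  simp only [trace, diag, piKronecker, of_apply]
  exact (Fintype.prod_sum fun j x => A j x x).symm

theorem conjTranspose_piKronecker [CommSemiring R] [StarRing R] (A : J → Matrix n n R) :
    (piKronecker A)ᴴ = piKronecker fun j => (A j)ᴴ := by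
  ext c c'
  simp [piKronecker]

end PiKronecker

section KroneckerFactor

variable {K l m n p : Type*} [Field K]

theorem exists_right_eq_smul_of_kronecker_eq {A A' : Matrix l m K} {B B' : Matrix n p K}
    (h : A ⊗ₖ B = A' ⊗ₖ B') (hA : A ≠ 0) : ∃ θ : K, B = θ • B' := by
  obtain ⟨i, j, hij⟩ : ∃ i j, A i j ≠ 0 := by
    by_contra! h0
    exact hA (Matrix.ext h0)
  refine ⟨A' i j / A i j, Matrix.ext fun k k' => ?_⟩
  have := congr_fun₂ h (i, k) (j, k')
  simp only [kronecker_apply] at this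
  rw [Matrix.smul_apply, smul_eq_mul, div_mul_eq_mul_div, eq_div_iff hij, mul_comm, this]

theorem exists_left_eq_smul_of_kronecker_eq {A A' : Matrix l m K} {B B' : Matrix n p K}
    (h : A ⊗ₖ B = A' ⊗ₖ B') (hB : B ≠ 0) : ∃ θ : K, A = θ • A' := by
  obtain ⟨k, k', hkk⟩ : ∃ k k', B k k' ≠ 0 := by
    by_contra! h0
    exact hB (Matrix.ext h0)
  refine ⟨B' k k' / B k k', Matrix.ext fun i j => ?_⟩
  have := congr_fun₂ h (i, k) (j, k')
  simp only [kronecker_apply] at this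
  rw [Matrix.smul_apply, smul_eq_mul, div_mul_eq_mul_div, eq_div_iff hkk, this, mul_comm]

end KroneckerFactor

end Matrix

theorem pauli_conjTranspose (a : Fin 4) : (pauli a)ᴴ = pauli a := by
  fin_cases a <;> ext i j <;> fin_cases i <;> fin_cases j <;> simp [pauli]

theorem pauli_mul_self (a : Fin 4) : pauli a * pauli a = 1 := by
  fin_cases a <;> ext i j <;> fin_cases i <;> fin_cases j <;>
    simp [pauli, mul_apply, Fin.sum_univ_two]

theorem trace_pauli_mul (a b : Fin 4) :
    (pauli a * pauli b).trace = if a = b then 2 else 0 := by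
  fin_cases a <;> fin_cases b <;>
    simp [pauli, trace, Fin.sum_univ_two] <;> norm_num

section PauliString

variable {J : Type*} [Fintype J] [DecidableEq J]

def pauliString (b : J → Fin 4) : Matrix (J → Fin 2) (J → Fin 2) ℂ :=
  piKronecker fun j => pauli (b j)

omit [DecidableEq J] in
theorem pauliString_zero : pauliString (0 : J → Fin 4) = 1 :=
  piKronecker_one

omit [DecidableEq J] in
theorem pauliString_conjTranspose (b : J → Fin 4) : (pauliString b)ᴴ = pauliString b := by
  simp only [pauliString, conjTranspose_piKronecker, pauli_conjTranspose]

theorem pauliString_mul_self (b : J → Fin 4) : pauliString b * pauliString b = 1 := by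
  rw [pauliString, piKronecker_mul, ← piKronecker_one]
  exact congrArg piKronecker (funext fun j => pauli_mul_self (b j))

theorem isUnit_pauliString (b : J → Fin 4) : IsUnit (pauliString b) :=
  ⟨⟨_, _, pauliString_mul_self b, pauliString_mul_self b⟩, rfl⟩

theorem trace_pauliString_mul (a b : J → Fin 4) :
    (pauliString a * pauliString b).trace = if a = b then 2 ^ Fintype.card J else 0 := by
  simp only [pauliString, piKronecker_mul, trace_piKronecker, Pi.mul_apply, trace_pauli_mul,
    Fintype.prod_ite_zero, prod_const, card_univ, funext_iff]

theorem trace_pauliString (b : J → Fin 4) :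
    (pauliString b).trace = if b = 0 then 2 ^ Fintype.card J else 0 := by
  simpa [pauliString_zero] using trace_pauliString_mul b 0

theorem eq_of_pauliString_mul_eq_smul_one {a b : J → Fin 4} {θ : ℂ}
    (h : pauliString a * pauliString b = θ • 1) : a = b := by
  have hθ : θ ≠ 0 := by
    rintro rfl
    exact ((isUnit_pauliString a).mul (isUnit_pauliString b)).ne_zero (by simpa using h)
  have htr := trace_pauliString_mul a b
  rw [h, trace_smul, trace_one] at htr
  by_contra hab
  rw [if_neg hab] at htr
  simp [hθ] at htr

end PauliString

section Realign

variable {C₁ C₂ : Type*}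

theorem realign_kronecker (A : Matrix C₁ C₁ ℂ) (B : Matrix C₂ C₂ ℂ) :
    realign (A ⊗ₖ B) = vecMulVec (Function.uncurry A) (Function.uncurry B) :=
  rfl

theorem realign_kronecker_mul_conjTranspose_mul [Fintype C₁] [Fintype C₂]
    (A A' A'' : Matrix C₁ C₁ ℂ) (B B' B'' : Matrix C₂ C₂ ℂ) :
    realign (A ⊗ₖ B) * (realign (A' ⊗ₖ B'))ᴴ * realign (A'' ⊗ₖ B'') =
      ((B * B'ᴴ).trace * (A'ᴴ * A'').trace) • realign (A ⊗ₖ B'') := by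
  have hB : Function.uncurry B ⬝ᵥ star (Function.uncurry B') = (B * B'ᴴ).trace := by
    simp [dotProduct, trace, mul_apply, Fintype.sum_prod_type, Function.uncurry]
  have hA : star (Function.uncurry A') ⬝ᵥ Function.uncurry A'' = (A'ᴴ * A'').trace := by
    simp [dotProduct, trace, mul_apply, Fintype.sum_prod_type, Function.uncurry]
    exact Finset.sum_comm
  simp only [realign_kronecker, conjTranspose_vecMulVec, vecMulVec_mul_vecMulVec, smul_dotProduct,
    hA, hB]
  ext p q
  simp [vecMulVec_apply]
  ring

theorem realign_smul (c : ℂ) (M : Matrix (C₁ × C₂) (C₁ × C₂) ℂ) :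
    realign (c • M) = c • realign M :=
  rfl

theorem realign_sum {ι : Type*} (s : Finset ι) (M : ι → Matrix (C₁ × C₂) (C₁ × C₂) ℂ) :
    realign (∑ i ∈ s, M i) = ∑ i ∈ s, realign (M i) := by
  ext p q
  simp [realign, Matrix.sum_apply]

theorem trace_conjTranspose_mul_self_realign [Fintype C₁] [Fintype C₂]
    (M : Matrix (C₁ × C₂) (C₁ × C₂) ℂ) :
    ((realign M)ᴴ * realign M).trace = (Mᴴ * M).trace := by
  rw [← star_vec_dotProduct_vec, ← star_vec_dotProduct_vec]
  exact Fintype.sum_equiv ((Equiv.prodComm _ _).trans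
    ((Equiv.prodProdProdComm C₁ C₁ C₂ C₂).trans (Equiv.prodComm _ _))) _ _ fun _ => rfl

end Realign

section PauliTensor

variable {I₁ I₂ : Type} [Fintype I₁] [Fintype I₂] [DecidableEq I₁] [DecidableEq I₂]

omit [DecidableEq I₁] [DecidableEq I₂] in
theorem pauliTensor_eq_kronecker (a : I₁ ⊕ I₂ → Fin 4) :
    pauliTensor a = pauliString (a ∘ Sum.inl) ⊗ₖ pauliString (a ∘ Sum.inr) := by
  ext p q
  simp [pauliTensor, pauliString, piKronecker, Fintype.prod_sum_type]

theorem smul_pauliTensor_mul (ε ε' : ℂ) (a b : I₁ ⊕ I₂ → Fin 4) :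
    ε • pauliTensor a * (ε' • pauliTensor b) =
      (ε * ε') • ((pauliString (a ∘ Sum.inl) * pauliString (b ∘ Sum.inl)) ⊗ₖ
        (pauliString (a ∘ Sum.inr) * pauliString (b ∘ Sum.inr))) := by
  rw [pauliTensor_eq_kronecker, pauliTensor_eq_kronecker, smul_mul_smul_comm, mul_kronecker_mul]

theorem supportedIn1_mul_iff {ε ε' : ℂ} {a b : I₁ ⊕ I₂ → Fin 4} (hε : ε ≠ 0) (hε' : ε' ≠ 0)
    (hP : IsPauli (ε • pauliTensor a * (ε' • pauliTensor b))) :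
    SupportedIn1 (ε • pauliTensor a * (ε' • pauliTensor b)) ↔
      a ∘ Sum.inr = b ∘ Sum.inr := by
  have hX : (ε * ε') • (pauliString (a ∘ Sum.inl) * pauliString (b ∘ Sum.inl)) ≠ 0 :=
    smul_ne_zero (mul_ne_zero hε hε')
      ((isUnit_pauliString _).mul (isUnit_pauliString _)).ne_zero
  rw [smul_pauliTensor_mul, ← smul_kronecker] at hP ⊢
  constructor
  · rintro ⟨δ, c, -, hc, hc0⟩
    rw [pauliTensor_eq_kronecker, ← smul_kronecker, show c ∘ Sum.inr = 0 from funext hc0,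
      pauliString_zero] at hc
    obtain ⟨θ, hθ⟩ := exists_right_eq_smul_of_kronecker_eq hc hX
    exact eq_of_pauliString_mul_eq_smul_one hθ
  · intro hab
    obtain ⟨δ, c, hδ, hc⟩ := hP
    refine ⟨δ, c, hδ, hc, fun i => congr_fun (?_ : c ∘ Sum.inr = 0) i⟩
    rw [hab, pauliString_mul_self, pauliTensor_eq_kronecker, ← smul_kronecker] at hc
    obtain ⟨θ, hθ⟩ := exists_right_eq_smul_of_kronecker_eq hc.symm
      (smul_ne_zero (ne_zero_of_eq_one_or_eq_neg_one hδ) (isUnit_pauliString _).ne_zero)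
    exact (eq_of_pauliString_mul_eq_smul_one (a := 0) (by rwa [pauliString_zero, one_mul])).symm

theorem supportedIn2_mul_iff {ε ε' : ℂ} {a b : I₁ ⊕ I₂ → Fin 4} (hε : ε ≠ 0) (hε' : ε' ≠ 0)
    (hP : IsPauli (ε • pauliTensor a * (ε' • pauliTensor b))) :
    SupportedIn2 (ε • pauliTensor a * (ε' • pauliTensor b)) ↔
      a ∘ Sum.inl = b ∘ Sum.inl := by
  have hY : (ε * ε') • (pauliString (a ∘ Sum.inr) * pauliString (b ∘ Sum.inr)) ≠ 0 :=
    smul_ne_zero (mul_ne_zero hε hε')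
      ((isUnit_pauliString _).mul (isUnit_pauliString _)).ne_zero
  rw [smul_pauliTensor_mul, ← kronecker_smul] at hP ⊢
  constructor
  · rintro ⟨δ, c, -, hc, hc0⟩
    rw [pauliTensor_eq_kronecker, ← kronecker_smul, show c ∘ Sum.inl = 0 from funext hc0,
      pauliString_zero] at hc
    obtain ⟨θ, hθ⟩ := exists_left_eq_smul_of_kronecker_eq hc hY
    exact eq_of_pauliString_mul_eq_smul_one hθ
  · intro hab
    obtain ⟨δ, c, hδ, hc⟩ := hP
    refine ⟨δ, c, hδ, hc, fun i => congr_fun (?_ : c ∘ Sum.inl = 0) i⟩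
    rw [hab, pauliString_mul_self, pauliTensor_eq_kronecker, ← kronecker_smul] at hc
    obtain ⟨θ, hθ⟩ := exists_left_eq_smul_of_kronecker_eq hc.symm
      (smul_ne_zero (ne_zero_of_eq_one_or_eq_neg_one hδ) (isUnit_pauliString _).ne_zero)
    exact (eq_of_pauliString_mul_eq_smul_one (a := 0) (by rwa [pauliString_zero, one_mul])).symm

end PauliTensor

namespace StabilizerGroup

variable {I₁ I₂ : Type} [Fintype I₁] [Fintype I₂] [DecidableEq I₁] [DecidableEq I₂]
  (G : StabilizerGroup I₁ I₂)

instance : Group G.carrier where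
  mul x y := ⟨x * y, G.mul_mem _ x.2 _ y.2⟩
  one := ⟨1, G.one_mem⟩
  inv x := x
  mul_assoc _ _ _ := Subtype.ext (_root_.mul_assoc _ _ _)
  one_mul _ := Subtype.ext (_root_.one_mul _)
  mul_one _ := Subtype.ext (_root_.mul_one _)
  inv_mul_cancel x := Subtype.ext (G.sq_eq_one _ x.2)

theorem coe_mul (x y : G.carrier) :
    ((x * y : G.carrier) : Matrix (Config I₁ I₂) (Config I₁ I₂) ℂ) = x * y :=
  rfl

theorem trace_eq_ite_of_mem {u : Matrix (Config I₁ I₂) (Config I₁ I₂) ℂ} (hu : u ∈ G.carrier) :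
    u.trace = if u = 1 then 2 ^ (Fintype.card I₁ + Fintype.card I₂) else 0 := by
  split_ifs with h1
  · simp [h1, Fintype.card_prod, pow_add]
  obtain ⟨ε, a, hε, rfl⟩ := G.isPauli u hu
  rw [pauliTensor_eq_kronecker, trace_smul, trace_kronecker, trace_pauliString,
    trace_pauliString]
  split_ifs with ha₁ ha₂
  · rw [pauliTensor_eq_kronecker, ha₁, ha₂, pauliString_zero, pauliString_zero,
      one_kronecker_one] at hu h1
    rcases hε with rfl | rfl
    · exact absurd (one_smul _ _) h1
    · exact absurd (by simpa using hu) G.neg_one_not_mem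
  all_goals simp

theorem sum_mul_left {g : Matrix (Config I₁ I₂) (Config I₁ I₂) ℂ} (hg : g ∈ G.carrier) :
    ∑ h ∈ G.carrier, g * h = ∑ u ∈ G.carrier, u := by
  rw [← Finset.sum_coe_sort G.carrier (g * ·), ← Finset.sum_coe_sort G.carrier]
  exact Equiv.sum_comp (Equiv.mulLeft (⟨g, hg⟩ : G.carrier)) Subtype.val

theorem stabDensity_mul_self :
    stabDensity G * stabDensity G =
      ((G.carrier.card : ℂ) / 2 ^ (Fintype.card I₁ + Fintype.card I₂)) • stabDensity G := by
  rw [stabDensity, smul_mul_smul_comm, Finset.sum_mul_sum,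
    Finset.sum_congr rfl fun g hg => sum_mul_left G hg, Finset.sum_const, smul_smul,
    ← Nat.cast_smul_eq_nsmul ℂ, smul_smul]
  congr 1
  field_simp

theorem trace_stabDensity : (stabDensity G).trace = 1 := by
  rw [stabDensity, trace_smul, trace_sum, Finset.sum_congr rfl fun u hu => trace_eq_ite_of_mem G hu,
    Finset.sum_ite_eq', if_pos G.one_mem, smul_eq_mul, inv_mul_cancel₀ (by positivity)]

theorem conjTranspose_stabDensity : (stabDensity G)ᴴ = stabDensity G := by
  rw [stabDensity, conjTranspose_smul, conjTranspose_sum,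
    Finset.sum_congr rfl fun g hg => (G.hermitian g hg).eq]
  simp

theorem trace_conjTranspose_mul_realign_stabDensity :
    ((realign (stabDensity G))ᴴ * realign (stabDensity G)).trace =
      (G.carrier.card : ℂ) / 2 ^ (Fintype.card I₁ + Fintype.card I₂) := by
  rw [trace_conjTranspose_mul_self_realign, conjTranspose_stabDensity, stabDensity_mul_self,
    trace_smul, trace_stabDensity, smul_eq_mul, mul_one]

open scoped Classical in
theorem realign_mul_conjTranspose_mul_realign {g h l : Matrix (Config I₁ I₂) (Config I₁ I₂) ℂ}
    (hg : g ∈ G.carrier) (hh : h ∈ G.carrier) (hl : l ∈ G.carrier) :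
    realign g * (realign h)ᴴ * realign l =
      if SupportedIn1 (g * h) ∧ SupportedIn2 (h * l) then
        (2 : ℂ) ^ (Fintype.card I₁ + Fintype.card I₂) • realign (g * h * l) else 0 := by
  have hgh := G.isPauli _ (G.mul_mem _ hg _ hh)
  have hhl := G.isPauli _ (G.mul_mem _ hh _ hl)
  obtain ⟨ε, a, hε, rfl⟩ := G.isPauli g hg
  obtain ⟨ε', b, hε', rfl⟩ := G.isPauli h hh
  obtain ⟨ε'', c, hε'', rfl⟩ := G.isPauli l hl
  have hstar : star ε' = ε' := by rcases hε' with rfl | rfl <;> simp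
  have hlhs : realign (ε • pauliTensor a) * (realign (ε' • pauliTensor b))ᴴ *
      realign (ε'' • pauliTensor c) =
        ((if a ∘ Sum.inr = b ∘ Sum.inr then 2 ^ Fintype.card I₂ else 0) *
          (ε' * ε'' * if b ∘ Sum.inl = c ∘ Sum.inl then 2 ^ Fintype.card I₁ else 0)) •
          realign ((ε • pauliString (a ∘ Sum.inl)) ⊗ₖ pauliString (c ∘ Sum.inr)) := by
    simp only [pauliTensor_eq_kronecker, ← smul_kronecker]
    rw [realign_kronecker_mul_conjTranspose_mul, conjTranspose_smul, pauliString_conjTranspose,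
      pauliString_conjTranspose, hstar, smul_mul_smul_comm, trace_smul, trace_pauliString_mul,
      trace_pauliString_mul, smul_eq_mul]
  rw [hlhs, supportedIn1_mul_iff (ne_zero_of_eq_one_or_eq_neg_one hε)
      (ne_zero_of_eq_one_or_eq_neg_one hε') hgh,
    supportedIn2_mul_iff (ne_zero_of_eq_one_or_eq_neg_one hε')
      (ne_zero_of_eq_one_or_eq_neg_one hε'') hhl]
  by_cases hab : a ∘ Sum.inr = b ∘ Sum.inr
  · by_cases hbc : b ∘ Sum.inl = c ∘ Sum.inl
    · have hprod : ε • pauliTensor a * (ε' • pauliTensor b) * (ε'' • pauliTensor c) =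
          (ε' * ε'') • ((ε • pauliString (a ∘ Sum.inl)) ⊗ₖ pauliString (c ∘ Sum.inr)) := by
        simp only [pauliTensor_eq_kronecker, smul_mul_smul_comm, ← mul_kronecker_mul]
        rw [hab, hbc, mul_assoc (pauliString _), pauliString_mul_self, pauliString_mul_self,
          mul_one, one_mul, smul_kronecker, smul_smul]
        ring_nf
      rw [if_pos hab, if_pos hbc, if_pos (And.intro hab hbc), hprod, realign_smul, smul_smul,
        pow_add]
      ring_nf
    · simp [hbc]
  · simp [hab]

theorem realign_stabDensity_eq_smul_sum :
    realign (stabDensity G) = ((2 : ℂ) ^ (Fintype.card I₁ + Fintype.card I₂))⁻¹ •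
      ∑ g : G.carrier, realign g.1 := by
  rw [stabDensity, realign_smul, realign_sum, Finset.sum_coe_sort]

theorem realign_stabDensity_mul_conjTranspose_mul :
    realign (stabDensity G) * (realign (stabDensity G))ᴴ * realign (stabDensity G) =
      ((Set.ncard {g | g ∈ G.carrier ∧ SupportedIn1 g} *
          Set.ncard {g | g ∈ G.carrier ∧ SupportedIn2 g} : ℕ) /
        (2 : ℂ) ^ (Fintype.card I₁ + Fintype.card I₂)) • realign (stabDensity G) := by
  classical
  have hsum : ∑ g : G.carrier, ∑ h : G.carrier, ∑ l : G.carrier,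
      realign g.1 * (realign h.1)ᴴ * realign l.1 =
      (Set.ncard {g | g ∈ G.carrier ∧ SupportedIn1 g} *
          Set.ncard {g | g ∈ G.carrier ∧ SupportedIn2 g}) •
        ∑ u : G.carrier, (2 : ℂ) ^ (Fintype.card I₁ + Fintype.card I₂) •
          realign u.1 := by
    simp only [fun (g h l : G.carrier) => realign_mul_conjTranspose_mul_realign G g.2 h.2 l.2,
      ← coe_mul]
    rw [sum_sum_sum_ite_mul_mul (fun x : G.carrier => SupportedIn1 x.1)
      (fun x : G.carrier => SupportedIn2 x.1) fun u => _ • realign u.1,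
      Finset.natCard_subtype_eq_ncard, Finset.natCard_subtype_eq_ncard]
  have hS : (∑ g : G.carrier, realign g.1) * (∑ g : G.carrier, realign g.1)ᴴ *
      ∑ g : G.carrier, realign g.1 =
      ∑ g : G.carrier, ∑ h : G.carrier, ∑ l : G.carrier,
        realign g.1 * (realign h.1)ᴴ * realign l.1 := by
    rw [Matrix.sum_mul, Matrix.sum_mul]
    refine Finset.sum_congr rfl fun g _ => ?_
    rw [conjTranspose_sum, Matrix.mul_sum _ _ (realign g.1), Matrix.sum_mul]
    exact Finset.sum_congr rfl fun h _ => Matrix.mul_sum _ _ _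
  have hc : star ((2 : ℂ) ^ (Fintype.card I₁ + Fintype.card I₂))⁻¹ =
      ((2 : ℂ) ^ (Fintype.card I₁ + Fintype.card I₂))⁻¹ := by simp
  rw [realign_stabDensity_eq_smul_sum, conjTranspose_smul, hc]
  simp only [Matrix.smul_mul, Matrix.mul_smul, smul_smul]
  rw [hS, hsum, ← Finset.smul_sum, ← Nat.cast_smul_eq_nsmul ℂ, smul_smul, smul_smul]
  congr 1
  field_simp

end StabilizerGroup

theorem trace_realign_pow_general {I₁ I₂ : Type} [Fintype I₁] [Fintype I₂]
    [DecidableEq I₁] [DecidableEq I₂]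
    (G : StabilizerGroup I₁ I₂) (k k₁ k₂ : ℕ)
    (hk : G.carrier.card = 2 ^ k)
    (hk₁ : Set.ncard {g | g ∈ G.carrier ∧ SupportedIn1 g} = 2 ^ k₁)
    (hk₂ : Set.ncard {g | g ∈ G.carrier ∧ SupportedIn2 g} = 2 ^ k₂)
    (n : ℕ) (hn : 2 ≤ n) :
    (((realign (stabDensity G))ᴴ * realign (stabDensity G)) ^ (n / 2)).trace =
      (2 : ℂ) ^ ((k : ℤ) + (((n / 2 : ℕ) : ℤ) - 1) * ((k₁ : ℤ) + (k₂ : ℤ)) -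
        ((n / 2 : ℕ) : ℤ) * ((Fintype.card I₁ : ℤ) + (Fintype.card I₂ : ℤ))) := by
  obtain ⟨m, hm⟩ : ∃ m, n / 2 = m + 1 := ⟨n / 2 - 1, by omega⟩
  set R := realign (stabDensity G)
  have hflat : Rᴴ * R * (Rᴴ * R) =
      ((2 ^ k₁ * 2 ^ k₂ : ℂ) / 2 ^ (Fintype.card I₁ + Fintype.card I₂)) • (Rᴴ * R) := by
    rw [Matrix.mul_assoc, ← Matrix.mul_assoc R, G.realign_stabDensity_mul_conjTranspose_mul,
      hk₁, hk₂, Matrix.mul_smul]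
    push_cast
    rfl
  rw [hm, pow_succ_eq_pow_smul_of_mul_self_eq_smul hflat, trace_smul,
    G.trace_conjTranspose_mul_realign_stabDensity, hk, smul_eq_mul,
    show (k : ℤ) + (((m + 1 : ℕ) : ℤ) - 1) * (k₁ + k₂) -
        ((m + 1 : ℕ) : ℤ) * (Fintype.card I₁ + Fintype.card I₂) =
      ((k + m * (k₁ + k₂) : ℕ) : ℤ) - (((m + 1) * (Fintype.card I₁ + Fintype.card I₂) : ℕ) : ℤ) by
        push_cast; ring,
    zpow_sub₀ two_ne_zero, zpow_natCast, zpow_natCast]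
  push_cast
  rw [div_pow, div_mul_div_comm]
  congr 1 <;> ring

/-- CCNR replica formula for a stabilizer state: for every even `n ≥ 2`,
`Tr[(R_ρ† R_ρ)^{n/2}] = 2^{k + (n/2 − 1)(k₁ + k₂) − (n/2)·N_A}`. -/
theorem trace_realign_pow {I₁ I₂ : Type} [Fintype I₁] [Fintype I₂]
    [DecidableEq I₁] [DecidableEq I₂]
    (G : StabilizerGroup I₁ I₂) (k k₁ k₂ : ℕ)
    (hk : G.carrier.card = 2 ^ k)
    (hk₁ : Set.ncard {g | g ∈ G.carrier ∧ SupportedIn1 g} = 2 ^ k₁)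
    (hk₂ : Set.ncard {g | g ∈ G.carrier ∧ SupportedIn2 g} = 2 ^ k₂)
    (n : ℕ) (hn : 2 ≤ n) (hne : Even n) :
    (((realign (stabDensity G))ᴴ * realign (stabDensity G)) ^ (n / 2)).trace =
      (2 : ℂ) ^ ((k : ℤ) + (((n / 2 : ℕ) : ℤ) - 1) * ((k₁ : ℤ) + (k₂ : ℤ)) -
        ((n / 2 : ℕ) : ℤ) * ((Fintype.card I₁ : ℤ) + (Fintype.card I₂ : ℤ))) :=
  trace_realign_pow_general G k k₁ k₂ hk hk₁ hk₂ n hn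
end

section
/- For every even natural number n ≥ 2, the double sum over binary strings μ, ν ∈ {0,1}^{n−1} of (−1) raised to the power Σ_{i=1}^{n−1} μ_i·ν_i + (Σ_{i=1}^{n−1} μ_i)·(Σ_{j=1}^{n−1} ν_j) equals 2^n; that is, Σ_{μ∈{0,1}^{n−1}} Σ_{ν∈{0,1}^{n−1}} (−1)^{Σ_i μ_iν_i + (Σ_i μ_i)(Σ_j ν_j)} = 2^n. -/
lemma inner_sum_eq (m : ℕ) (μ : Fin m → Fin 2) :
    ∑ ν : Fin m → Fin 2,
      (-1 : ℤ) ^ (∑ i, (μ i : ℕ) * (ν i : ℕ) +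
        (∑ i, (μ i : ℕ)) * (∑ j, (ν j : ℕ))) =
    ∏ i, ((1 : ℤ) + (-1) ^ ((μ i : ℕ) + ∑ j, (μ j : ℕ))) := by
  set k := ∑ j, (μ j : ℕ) with hk
  have h1 : ∀ ν : Fin m → Fin 2,
      (∑ i, (μ i : ℕ) * (ν i : ℕ) + k * (∑ j, (ν j : ℕ)))
        = ∑ i, ((μ i : ℕ) + k) * (ν i : ℕ) := by
    intro ν
    rw [Finset.mul_sum, ← Finset.sum_add_distrib]
    simp [add_mul]
  calc ∑ ν : Fin m → Fin 2,
      (-1 : ℤ) ^ (∑ i, (μ i : ℕ) * (ν i : ℕ) + k * (∑ j, (ν j : ℕ)))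
      = ∑ ν : Fin m → Fin 2, ∏ i, (-1 : ℤ) ^ (((μ i : ℕ) + k) * (ν i : ℕ)) := by
        refine Finset.sum_congr rfl fun ν _ => ?_
        rw [h1 ν, ← Finset.prod_pow_eq_pow_sum]
    _ = ∏ i, ∑ x : Fin 2, (-1 : ℤ) ^ (((μ i : ℕ) + k) * (x : ℕ)) := by
        rw [Finset.prod_univ_sum]
        rw [Fintype.piFinset_univ]
    _ = ∏ i, ((1 : ℤ) + (-1) ^ ((μ i : ℕ) + k)) := by
        refine Finset.prod_congr rfl fun i _ => ?_
        rw [Fin.sum_univ_two]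
        simp

lemma prod_eval (m : ℕ) (hm : Odd m) (μ : Fin m → Fin 2) :
    ∏ i, ((1 : ℤ) + (-1) ^ ((μ i : ℕ) + ∑ j, (μ j : ℕ))) =
      if μ = (fun _ => (0 : Fin 2)) ∨ μ = (fun _ => (1 : Fin 2)) then 2 ^ m else 0 := by
  set k := ∑ j, (μ j : ℕ) with hk
  rcases Nat.even_or_odd k with hke | hko
  · by_cases h0 : μ = fun _ => (0 : Fin 2)
    · subst h0
      simp [hk]
    · have h1 : μ ≠ fun _ => (1 : Fin 2) := by
        intro h1
        subst h1
        simp [hk] at hke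
        exact (Nat.not_even_iff_odd.mpr hm) hke
      rw [if_neg (by tauto)]
      obtain ⟨i, hi⟩ : ∃ i, μ i ≠ 0 := by
        by_contra h; push_neg at h; exact h0 (funext h)
      refine Finset.prod_eq_zero (Finset.mem_univ i) ?_
      have : (μ i : ℕ) = 1 := by omega
      rw [this]
      have : Odd (1 + k) := by
        rcases hke with ⟨t, ht⟩; exact ⟨t, by omega⟩
      rw [this.neg_one_pow]; ring
  · by_cases h1 : μ = fun _ => (1 : Fin 2)
    · subst h1
      rw [if_pos (Or.inr rfl)]
      have hk' : k = m := by simp [hk]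
      have heven : Even ((((1 : Fin 2) : ℕ)) + k) := by
        rw [hk']; rcases hm with ⟨t, ht⟩; exact ⟨t + 1, show (1 : ℕ) + m = t + 1 + (t + 1) by omega⟩
      have h2 : ((-1 : ℤ)) ^ ((((1 : Fin 2)) : ℕ) + k) = 1 := heven.neg_one_pow
      simp only [h2]
      norm_num [Finset.prod_const, Finset.card_univ]
    · have h0 : μ ≠ fun _ => (0 : Fin 2) := by
        intro h0; subst h0; simp [hk] at hko
      rw [if_neg (by tauto)]
      obtain ⟨i, hi⟩ : ∃ i, μ i ≠ 1 := by
        by_contra h; push_neg at h; exact h1 (funext h)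
      refine Finset.prod_eq_zero (Finset.mem_univ i) ?_
      have : (μ i : ℕ) = 0 := by omega
      rw [this, Nat.zero_add, hko.neg_one_pow]; ring

/-- For every even `n ≥ 2`,
`Σ_{μ,ν ∈ {0,1}^{n-1}} (−1)^{Σ_i μ_i ν_i + (Σ_i μ_i)(Σ_j ν_j)} = 2^n`. -/
theorem sum_sign_double (n : ℕ) (hn : 2 ≤ n) (hne : Even n) :
    ∑ μ : Fin (n - 1) → Fin 2, ∑ ν : Fin (n - 1) → Fin 2,
      (-1 : ℤ) ^ (∑ i, (μ i : ℕ) * (ν i : ℕ) +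
        (∑ i, (μ i : ℕ)) * (∑ j, (ν j : ℕ))) = 2 ^ n := by
  set m := n - 1 with hmdef
  have hm : Odd m := by
    rcases hne with ⟨t, ht⟩
    exact ⟨t - 1, by omega⟩
  have hmn : m + 1 = n := by omega
  have hne01 : (fun _ => (0 : Fin 2)) ≠ (fun _ : Fin m => (1 : Fin 2)) := by
    intro h
    have hm1 : 1 ≤ m := by omega
    have := congrFun h ⟨0, by omega⟩
    simp at this
  calc ∑ μ : Fin m → Fin 2, ∑ ν : Fin m → Fin 2,
      (-1 : ℤ) ^ (∑ i, (μ i : ℕ) * (ν i : ℕ) +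
        (∑ i, (μ i : ℕ)) * (∑ j, (ν j : ℕ)))
      = ∑ μ : Fin m → Fin 2,
          (if μ = (fun _ => (0 : Fin 2)) ∨ μ = (fun _ => (1 : Fin 2))
            then (2 : ℤ) ^ m else 0) := by
        refine Finset.sum_congr rfl fun μ _ => ?_
        rw [inner_sum_eq m μ, prod_eval m hm μ]
    _ = ∑ μ : Fin m → Fin 2,
          (if μ ∈ ({(fun _ => (0 : Fin 2)), (fun _ => (1 : Fin 2))} :
            Finset (Fin m → Fin 2)) then (2 : ℤ) ^ m else 0) := by
        refine Finset.sum_congr rfl fun μ _ => ?_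
        simp [Finset.mem_insert]
    _ = ∑ μ ∈ ({(fun _ => (0 : Fin 2)), (fun _ => (1 : Fin 2))} :
          Finset (Fin m → Fin 2)), (2 : ℤ) ^ m := by
        rw [Finset.sum_ite_mem, Finset.univ_inter]
    _ = 2 ^ m + 2 ^ m := Finset.sum_pair hne01
    _ = 2 ^ n := by rw [← hmn]; ring
end

section
/- Let α be a nonempty finite type, x : α → ℝ with x_a > 0 for all a and Σ_a x_a = 1, and y : α → ℝ with y_a > 0 for all a. Then the function n ↦ (1−n)^{-1}·log(Σ_a x_a^n · y_a^{1−n}) of a real variable n tends to Σ_a x_a·(log y_a − log x_a) as n → 1 (along n ≠ 1). -/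
open Filter Topology

/-!
Put `S n = Σ_a x_a^n y_a^{1-n}`. Since `Σ_a x_a = 1` we have `S 1 = 1`, so `log ∘ S` vanishes
at `1` and the expression is minus its difference quotient at `1`. It therefore tends to
`-(log ∘ S)'(1) = -S'(1) = Σ_a x_a (log y_a - log x_a)`.
-/

theorem HasDerivAt.tendsto_inv_sub_mul_of_eq_zero {f : ℝ → ℝ} {f' a : ℝ}
    (hf : HasDerivAt f f' a) (h₀ : f a = 0) :
    Tendsto (fun t => (a - t)⁻¹ * f t) (𝓝[≠] a) (𝓝 (-f')) := by
  refine (hasDerivAt_iff_tendsto_slope.mp hf).neg.congr fun t => ?_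
  rw [slope_def_field, h₀, ← neg_sub t a, inv_neg]
  ring

theorem Real.hasDerivAt_rpow_mul_rpow_one_sub {u v : ℝ} (hu : 0 < u) (hv : 0 < v) (t : ℝ) :
    HasDerivAt (fun s : ℝ => u ^ s * v ^ (1 - s))
      (u ^ t * v ^ (1 - t) * (Real.log u - Real.log v)) t := by
  have hu' := (hasDerivAt_id' t).const_rpow hu
  have hv' := ((hasDerivAt_id' t).const_sub 1).const_rpow hv
  exact (hu'.mul hv').congr_deriv (by ring)

theorem Real.hasDerivAt_sum_rpow_mul_rpow_one_sub_one {α : Type*} [Fintype α] {x y : α → ℝ}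
    (hx : ∀ a, 0 < x a) (hy : ∀ a, 0 < y a) :
    HasDerivAt (fun n : ℝ => ∑ a, x a ^ n * y a ^ (1 - n))
      (∑ a, x a * (Real.log (x a) - Real.log (y a))) 1 := by
  refine (HasDerivAt.fun_sum fun a _ =>
    Real.hasDerivAt_rpow_mul_rpow_one_sub (hx a) (hy a) 1).congr_deriv ?_
  simp

theorem tendsto_renyi_limit_general {α : Type*} [Fintype α]
    (x y : α → ℝ) (hx : ∀ a, 0 < x a) (hsum : ∑ a, x a = 1) (hy : ∀ a, 0 < y a) :
    Tendsto (fun n : ℝ => (1 - n)⁻¹ * Real.log (∑ a, x a ^ n * y a ^ (1 - n)))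
      (nhdsWithin 1 {(1 : ℝ)}ᶜ)
      (nhds (∑ a, x a * (Real.log (y a) - Real.log (x a)))) := by
  have hS₁ : ∑ a, x a ^ (1 : ℝ) * y a ^ (1 - 1 : ℝ) = 1 := by simpa using hsum
  have hlogS :=
    (Real.hasDerivAt_sum_rpow_mul_rpow_one_sub_one hx hy).log (by rw [hS₁]; exact one_ne_zero)
  rw [hS₁, div_one] at hlogS
  convert hlogS.tendsto_inv_sub_mul_of_eq_zero (by simp only [hS₁, Real.log_one]) using 2
  rw [← Finset.sum_neg_distrib]
  exact Finset.sum_congr rfl fun a _ => by ring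

/-- For positive weights `x` summing to `1` and positive `y`, the function
`n ↦ (1−n)⁻¹·log(Σ_a x_a^n · y_a^{1−n})` tends to `Σ_a x_a·(log y_a − log x_a)`
as `n → 1` along `n ≠ 1`. -/
theorem tendsto_renyi_limit {α : Type*} [Fintype α] [Nonempty α]
    (x y : α → ℝ) (hx : ∀ a, 0 < x a) (hsum : ∑ a, x a = 1) (hy : ∀ a, 0 < y a) :
    Tendsto (fun n : ℝ => (1 - n)⁻¹ * Real.log (∑ a, x a ^ n * y a ^ (1 - n)))
      (nhdsWithin 1 {(1 : ℝ)}ᶜ)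
      (nhds (∑ a, x a * (Real.log (y a) - Real.log (x a)))) :=
  tendsto_renyi_limit_general x y hx hsum hy
end
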